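/- arXiv:1311.5648 — 2 statements merged into one kernel-verified Lean document; each statement's English description precedes it below -/
import Mathlib

section
/- Let (X, Y, λ, q, α) be a Wall pairing of rank g. Let V ⊆ X and W ⊆ Y be free submodules of rank k > 0, each a direct summand, such that the restriction λ|_{V×W} : V × W → ℤ is a perfect pairing. Define W^⊥ = {x ∈ X : λ(x,w) = 0 for all w ∈ W}, V^⊥ = {y ∈ Y : λ(v,y) = 0 for all v ∈ V}, and Ŵ = {y ∈ Y : q(y,w) = 0 for all w ∈ W}. Then the tuple (W^⊥, V^⊥ ∩ Ŵ) together with the restrictions of λ, q, α is a Wall pairing of rank g − k. -/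
/-- A Wall pairing of rank `g`.  `X` is a free `ℤ`-module of rank `g` (with chosen
basis `bX`), `Y ≅ ℤ^g ⊕ (ℤ/2)^g` via `eY` (the images of the standard generators are the
`y_i = eY (Pi.single i 1, 0)` and `z_i = eY (0, Pi.single i 1)`, the latter forming a basis of the
torsion subgroup), `lam` is the bilinear pairing, `qf` the symmetric bilinear form, and `alpha`
a quadratic-type refinement valued in an abelian group `A` with homomorphism `bd : ℤ/2 → A`. -/
structure WallPairing (g : ℕ) (X Y A : Type) [AddCommGroup X] [AddCommGroup Y]
    [AddCommGroup A] where
  lam : X →+ Y →+ ℤ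
  qf : Y →+ Y →+ ZMod 2
  qf_symm : ∀ a b : Y, qf a b = qf b a
  bd : ZMod 2 →+ A
  alpha : Y → A
  alpha_add : ∀ a b : Y, alpha (a + b) = alpha a + alpha b + bd (qf a b)
  bX : Module.Basis (Fin g) ℤ X
  eY : ((Fin g → ℤ) × (Fin g → ZMod 2)) ≃+ Y
  lam_xy : ∀ i j, lam (bX i) (eY (Pi.single j 1, 0)) = if i = j then 1 else 0
  lam_xz : ∀ i j, lam (bX i) (eY (0, Pi.single j 1)) = 0
  q_yz : ∀ i j, qf (eY (Pi.single i 1, 0)) (eY (0, Pi.single j 1)) = if i = j then 1 else 0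
  q_yy : ∀ i j, qf (eY (Pi.single i 1, 0)) (eY (Pi.single j 1, 0)) = 0
  q_zz : ∀ i j, qf (eY (0, Pi.single i 1)) (eY (0, Pi.single j 1)) = 0
  alpha_y : ∀ i, alpha (eY (Pi.single i 1, 0)) = 0
  alpha_z : ∀ i, alpha (eY (0, Pi.single i 1)) = 0
/-- The subgroup of `X` of elements `x` with `λ(x, w) = 0` for all `w ∈ S` (denoted `S^⊥`). -/
def lamPerpX {X Y : Type} [AddCommGroup X] [AddCommGroup Y] (lam : X →+ Y →+ ℤ)
    (S : AddSubgroup Y) : AddSubgroup X where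
  carrier := {x : X | ∀ w ∈ S, lam x w = 0}
  zero_mem' := by intro w hw; simp
  add_mem' := by intro a b ha hb w hw; simp [ha w hw, hb w hw]
  neg_mem' := by intro a ha w hw; simp [ha w hw]

/-- The subgroup of `Y` of elements `y` with `λ(v, y) = 0` for all `v ∈ S` (denoted `S^⊥`). -/
def lamPerpY {X Y : Type} [AddCommGroup X] [AddCommGroup Y] (lam : X →+ Y →+ ℤ)
    (S : AddSubgroup X) : AddSubgroup Y where
  carrier := {y : Y | ∀ v ∈ S, lam v y = 0}
  zero_mem' := by intro v hv; simp
  add_mem' := by intro a b ha hb v hv; simp [ha v hv, hb v hv]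
  neg_mem' := by intro a ha v hv; simp [ha v hv]

/-- The subgroup of `Y` of elements `y` with `q(y, w) = 0` for all `w ∈ S` (denoted `Ŝ`). -/
def qPerp {Y : Type} [AddCommGroup Y] (q : Y →+ Y →+ ZMod 2) (S : AddSubgroup Y) :
    AddSubgroup Y where
  carrier := {y : Y | ∀ w ∈ S, q y w = 0}
  zero_mem' := by intro w hw; simp
  add_mem' := by intro a b ha hb w hw; simp [ha w hw, hb w hw]
  neg_mem' := by intro a ha w hw; simp [ha w hw]

/-!
The perfect pairing `λ|V×W` splits `X = V ⊕ W^⊥` and `Y = W ⊕ V^⊥`, so `W^⊥` is free of rank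
`g - k`; let `(p_j)` be a basis. In any Wall pairing, reducing coordinates mod 2 gives a map
`β = torsionOf : X → Y`, `x_i ↦ z_i`, onto the torsion of `Y`, with `q(β x, y) = λ(x, y) mod 2` and
`α(β x) = 0`. The torsion generators of the complement are the `β p_j`. For the free ones, realise
the functionals dual to `(p_j)` and vanishing on `V` by elements `u_j ∈ V^⊥ ∩ Ŵ` (the `q`-pairing
with the free module `W` is corrected by some `β v`, using perfectness), then make them
`q`-isotropic with `α(u_j) = 0` by adding elements `β t`, `t ∈ W^⊥`. Finally
`y ↦ (λ(p_j, y), q(y, u_j))_j` identifies `V^⊥ ∩ Ŵ` with `ℤ^(g-k) × (ℤ/2)^(g-k)`.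
-/

open Module

theorem Module.Basis.addMonoidHom_ext {ι X C : Type*} [AddCommGroup X] [AddCommGroup C]
    (b : Basis ι ℤ X) {f h : X →+ C} (hb : ∀ i, f (b i) = h (b i)) : f = h :=
  AddMonoidHom.toIntLinearMap_injective (b.ext hb)

section PerfectPairing

variable {X Y : Type} [AddCommGroup X] [AddCommGroup Y]

theorem isCompl_lamPerpX (lam : X →+ Y →+ ℤ) (V : AddSubgroup X) (W : AddSubgroup Y)
    (h : Function.Bijective fun v : V => (lam (v : X)).comp W.subtype) :
    IsCompl V (lamPerpX lam W) := by
  constructor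
  · rw [AddSubgroup.disjoint_def]
    intro x hxV hxP
    have : (⟨x, hxV⟩ : V) = 0 := h.1 (by ext w; simpa using hxP w w.2)
    simpa using congrArg Subtype.val this
  · rw [codisjoint_iff, eq_top_iff]
    intro x _
    obtain ⟨v, hv⟩ := h.2 ((lam x).comp W.subtype)
    refine AddSubgroup.mem_sup.mpr ⟨v, v.2, x - v, fun w hw => ?_, add_sub_cancel _ _⟩
    simpa [sub_eq_zero] using (DFunLike.congr_fun hv ⟨w, hw⟩).symm

theorem isCompl_lamPerpY (lam : X →+ Y →+ ℤ) (V : AddSubgroup X) (W : AddSubgroup Y)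
    (h : Function.Bijective fun w : W => (lam.flip (w : Y)).comp V.subtype) :
    IsCompl W (lamPerpY lam V) :=
  isCompl_lamPerpX lam.flip W V h

theorem lam_sub_sum_eq_zero (lam : X →+ Y →+ ℤ) {V P : AddSubgroup X} (hVP : V ⊔ P = ⊤)
    {m : ℕ} (bP : Basis (Fin m) ℤ P) {u : Fin m → Y} (hu : ∀ j, u j ∈ lamPerpY lam V)
    (hlam : ∀ i j, lam (bP i) (u j) = if i = j then 1 else 0)
    {y : Y} (hy : y ∈ lamPerpY lam V) (x : X) :
    lam x (y - ∑ j, lam (bP j) y • u j) = 0 := by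
  let f := lam.flip (y - ∑ j, lam (bP j) y • u j)
  have hV : V ≤ f.ker := fun v hv => by simp [f, hy v hv, fun j => hu j v hv]
  have hP : P ≤ f.ker := by
    have : f.comp P.subtype = 0 := bP.addMonoidHom_ext fun i => by simp [f, hlam]
    exact fun p hp => AddMonoidHom.mem_ker.mpr (DFunLike.congr_fun this ⟨p, hp⟩)
  exact (hVP ▸ sup_le hV hP : ⊤ ≤ f.ker) (AddSubgroup.mem_top x)

end PerfectPairing

theorem nonempty_basis_of_isCompl {X : Type*} [AddCommGroup X] {g k : ℕ} {V P : AddSubgroup X}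
    (h : IsCompl V P) (bX : Basis (Fin g) ℤ X) (bV : Basis (Fin k) ℤ V) :
    Nonempty (Basis (Fin (g - k)) ℤ P) := by
  let V' := AddSubgroup.toIntSubmodule V
  let P' := AddSubgroup.toIntSubmodule P
  let e : (V' × P') ≃ₗ[ℤ] X :=
    Submodule.prodEquivOfIsCompl _ _ (AddSubgroup.toIntSubmodule.isCompl_iff.mp h)
  have := Module.Free.of_basis bX
  have := Module.Finite.of_basis bX
  have hrank : finrank ℤ P' = g - k := by
    have := e.finrank_eq
    rw [finrank_prod, finrank_eq_card_basis (show Basis (Fin k) ℤ V' from bV),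
      finrank_eq_card_basis bX] at this
    simp only [Fintype.card_fin] at this
    omega
  exact ⟨finBasisOfFinrankEq ℤ P' hrank⟩

namespace WallPairing

variable {g : ℕ} {X Y A : Type} [AddCommGroup X] [AddCommGroup Y] [AddCommGroup A]
  (M : WallPairing g X Y A)

def y (i : Fin g) : Y := M.eY (Pi.single i 1, 0)

def z (i : Fin g) : Y := M.eY (0, Pi.single i 1)

theorem eY_eq_sum (a : Fin g → ℤ) (b : Fin g → ZMod 2) :
    M.eY (a, b) = ∑ i, a i • M.y i + ∑ i, (b i).val • M.z i := by
  simp only [y, z, ← map_zsmul, ← map_nsmul, ← map_sum, ← map_add]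
  congr 1
  ext j <;> simp [Prod.fst_sum, Prod.snd_sum, Finset.sum_apply, Pi.single_apply, -nsmul_eq_mul]

theorem hom_ext {C : Type*} [AddCommGroup C] {f h : Y →+ C}
    (hy : ∀ i, f (M.y i) = h (M.y i)) (hz : ∀ i, f (M.z i) = h (M.z i)) : f = h := by
  ext t
  obtain ⟨⟨a, b⟩, rfl⟩ := M.eY.surjective t
  simp [eY_eq_sum, hy, hz]

theorem lam_z (x : X) (j : Fin g) : M.lam x (M.z j) = 0 := by
  have : M.lam.flip (M.z j) = 0 := M.bX.addMonoidHom_ext fun i => M.lam_xz i j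
  exact DFunLike.congr_fun this x

theorem lam_y (x : X) (j : Fin g) : M.lam x (M.y j) = M.bX.repr x j := by
  have : M.lam.flip (M.y j) = (M.bX.coord j).toAddMonoidHom :=
    M.bX.addMonoidHom_ext fun i => by simp [y, M.lam_xy, Finsupp.single_apply]
  exact DFunLike.congr_fun this x

theorem lam_basis_eY (i : Fin g) (a : Fin g → ℤ) (b : Fin g → ZMod 2) :
    M.lam (M.bX i) (M.eY (a, b)) = a i := by
  simp [eY_eq_sum, lam_y, lam_z, Finsupp.single_apply]

theorem qf_z (i : Fin g) (y : Y) : M.qf (M.z i) y = M.lam (M.bX i) y := by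
  have : M.qf (M.z i) = (Int.castAddHom (ZMod 2)).comp (M.lam (M.bX i)) :=
    M.hom_ext
      (fun j => by
        rw [AddMonoidHom.comp_apply, M.qf_symm]
        simp [WallPairing.y, z, M.q_yz, M.lam_xy, eq_comm])
      (fun j => by simp [z, M.q_zz, M.lam_xz])
  exact DFunLike.congr_fun this y

theorem qf_self (y : Y) : M.qf y y = 0 := by
  let f : Y →+ ZMod 2 := AddMonoidHom.mk' (fun y => M.qf y y) fun a b => by
    simp only [map_add, AddMonoidHom.add_apply, M.qf_symm b a]
    linear_combination CharTwo.add_self_eq_zero (M.qf a b)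
  have : f = 0 := M.hom_ext (fun i => M.q_yy i i) (fun i => M.q_zz i i)
  exact DFunLike.congr_fun this y

theorem alpha_mem_range (y : Y) : M.alpha y ∈ M.bd.range := by
  let f : Y →+ A ⧸ M.bd.range := AddMonoidHom.mk' (fun y => (M.alpha y : A ⧸ M.bd.range))
    fun a b => by
      rw [M.alpha_add, QuotientAddGroup.mk_add, QuotientAddGroup.mk_add,
        (QuotientAddGroup.eq_zero_iff _).mpr (AddMonoidHom.mem_range.mpr ⟨_, rfl⟩), add_zero]
  have : f = 0 := M.hom_ext (fun i => by simp [f, WallPairing.y, M.alpha_y])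
    (fun i => by simp [f, z, M.alpha_z])
  exact (QuotientAddGroup.eq_zero_iff _).mp (DFunLike.congr_fun this y)

theorem exists_lam_eq (f : X →+ ℤ) : ∃ y, ∀ x, M.lam x y = f x := by
  refine ⟨M.eY (fun i => f (M.bX i), 0), fun x => ?_⟩
  have : M.lam.flip (M.eY (fun i => f (M.bX i), 0)) = f :=
    M.bX.addMonoidHom_ext fun i => by simp [lam_basis_eY]
  exact DFunLike.congr_fun this x

noncomputable def torsionOf : X →+ Y :=
  AddMonoidHom.mk' (fun x => M.eY (0, fun i => (M.bX.repr x i : ZMod 2))) fun x x' => by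
    rw [← map_add]
    congr 1
    ext i <;> simp

theorem torsionOf_apply (x : X) : M.torsionOf x = M.eY (0, fun i => (M.bX.repr x i : ZMod 2)) :=
  rfl

theorem torsionOf_basis (i : Fin g) : M.torsionOf (M.bX i) = M.z i := by
  rw [torsionOf_apply, z, Basis.repr_self]
  congr 2
  ext j
  simp [Finsupp.single_apply, Pi.single_apply, eq_comm]

theorem lam_torsionOf (x' x : X) : M.lam x' (M.torsionOf x) = 0 := by
  simp [torsionOf_apply, eY_eq_sum, lam_z]

theorem qf_torsionOf (x : X) (y : Y) : M.qf (M.torsionOf x) y = M.lam x y := by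
  have : (M.qf.flip y).comp M.torsionOf = (Int.castAddHom (ZMod 2)).comp (M.lam.flip y) :=
    M.bX.addMonoidHom_ext fun i => by simp [torsionOf_basis, qf_z]
  exact DFunLike.congr_fun this x

theorem alpha_torsionOf (x : X) : M.alpha (M.torsionOf x) = 0 := by
  let f : X →+ A := AddMonoidHom.mk' (fun x => M.alpha (M.torsionOf x)) fun a b => by
    rw [map_add, M.alpha_add, qf_torsionOf, lam_torsionOf, Int.cast_zero, map_zero, add_zero]
  have : f = 0 := M.bX.addMonoidHom_ext fun i => by simp [f, torsionOf_basis, z, M.alpha_z]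
  exact DFunLike.congr_fun this x

theorem alpha_add_torsionOf (y : Y) (x : X) :
    M.alpha (y + M.torsionOf x) = M.alpha y + M.bd (M.lam x y) := by
  rw [M.alpha_add, alpha_torsionOf, M.qf_symm, qf_torsionOf, add_zero]

theorem exists_torsionOf_eq {t : Y} (ht : ∀ x, M.lam x t = 0) : ∃ x, M.torsionOf x = t := by
  obtain ⟨⟨a, b⟩, rfl⟩ := M.eY.surjective t
  have ha : a = 0 := funext fun i => by simpa [lam_basis_eY] using ht (M.bX i)
  refine ⟨M.bX.equivFun.symm fun i => (b i).val, ?_⟩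
  have hrepr : ∀ i, M.bX.repr (M.bX.equivFun.symm fun i => (b i).val) i = (b i).val := fun i => by
    rw [← Basis.equivFun_apply, LinearEquiv.apply_symm_apply]
  rw [torsionOf_apply, ha]
  congr 2
  ext i
  rw [hrepr]
  simp

theorem eq_zero_of_lam_qf {t : Y} (hlam : ∀ x, M.lam x t = 0) (hqf : ∀ y, M.qf t y = 0) :
    t = 0 := by
  obtain ⟨x, rfl⟩ := M.exists_torsionOf_eq hlam
  have : (fun i => (M.bX.repr x i : ZMod 2)) = 0 :=
    funext fun i => by rw [← lam_y, ← qf_torsionOf]; exact hqf _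
  rw [torsionOf_apply, this]
  exact map_zero M.eY

section Complement

variable {V : AddSubgroup X} {W : AddSubgroup Y}

theorem torsionOf_mem {x : X} (hx : x ∈ lamPerpX M.lam W) :
    M.torsionOf x ∈ lamPerpY M.lam V ⊓ qPerp M.qf W :=
  ⟨fun v _ => M.lam_torsionOf v x, fun w hw => by rw [qf_torsionOf, hx w hw, Int.cast_zero]⟩

theorem exists_qf_torsionOf_eq [Module.Projective ℤ W]
    (hsurj : Function.Surjective fun v : V => (M.lam (v : X)).comp W.subtype) (y : Y) :
    ∃ x, ∀ w ∈ W, M.qf (M.torsionOf x) w = M.qf y w := by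
  obtain ⟨φ, hφ⟩ := Module.projective_lifting_property
    (Int.castAddHom (ZMod 2)).toIntLinearMap ((M.qf y).comp W.subtype).toIntLinearMap
    ZMod.intCast_surjective
  obtain ⟨v, hv⟩ := hsurj φ.toAddMonoidHom
  refine ⟨v, fun w hw => ?_⟩
  have hvw : M.lam v w = φ ⟨w, hw⟩ := DFunLike.congr_fun hv ⟨w, hw⟩
  have hφw : (φ ⟨w, hw⟩ : ZMod 2) = M.qf y w := LinearMap.congr_fun hφ ⟨w, hw⟩
  rw [qf_torsionOf, hvw, hφw]

theorem exists_mem_lam_eq [Module.Projective ℤ W]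
    (hsurj : Function.Surjective fun v : V => (M.lam (v : X)).comp W.subtype)
    (f : X →+ ℤ) (hf : ∀ v ∈ V, f v = 0) :
    ∃ y ∈ lamPerpY M.lam V ⊓ qPerp M.qf W, ∀ x, M.lam x y = f x := by
  obtain ⟨y₀, hy₀⟩ := M.exists_lam_eq f
  obtain ⟨x₀, hx₀⟩ := M.exists_qf_torsionOf_eq hsurj y₀
  refine ⟨y₀ - M.torsionOf x₀, ⟨fun v hv => ?_, fun w hw => ?_⟩, fun x => ?_⟩
  · simp [hy₀, hf v hv, lam_torsionOf]
  · simp [hx₀ w hw]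
  · simp [hy₀, lam_torsionOf]

theorem exists_lam_dual [Module.Projective ℤ W]
    (hsurj : Function.Surjective fun v : V => (M.lam (v : X)).comp W.subtype)
    {P : AddSubgroup X} (hVP : IsCompl V P) {m : ℕ} (bP : Basis (Fin m) ℤ P) :
    ∃ u : Fin m → Y, (∀ j, u j ∈ lamPerpY M.lam V ⊓ qPerp M.qf W) ∧
      ∀ i j, M.lam (bP i) (u j) = if i = j then 1 else 0 := by
  have hVP' := AddSubgroup.toIntSubmodule.isCompl_iff.mp hVP
  let bP' : Basis (Fin m) ℤ (AddSubgroup.toIntSubmodule P) := bP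
  choose u hu hlam using fun j => M.exists_mem_lam_eq hsurj
    (LinearMap.ofIsCompl hVP' 0 (bP'.coord j)).toAddMonoidHom
    (fun v hv => LinearMap.ofIsCompl_apply_left hVP' ⟨v, hv⟩)
  refine ⟨u, hu, fun i j => ?_⟩
  rw [show (bP i : X) = bP' i from rfl, hlam, LinearMap.toAddMonoidHom_coe,
    LinearMap.ofIsCompl_apply_right, Basis.coord_apply, Basis.repr_self, Finsupp.single_apply]

theorem exists_isotropic_dual {P : AddSubgroup X} (hP : P ≤ lamPerpX M.lam W) {m : ℕ}
    (bP : Basis (Fin m) ℤ P) {u₀ : Fin m → Y}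
    (hu₀ : ∀ j, u₀ j ∈ lamPerpY M.lam V ⊓ qPerp M.qf W)
    (hlam₀ : ∀ i j, M.lam (bP i) (u₀ j) = if i = j then 1 else 0) :
    ∃ u : Fin m → Y, (∀ j, u j ∈ lamPerpY M.lam V ⊓ qPerp M.qf W) ∧
      (∀ i j, M.lam (bP i) (u j) = if i = j then 1 else 0) ∧
      (∀ i j, M.qf (u i) (u j) = 0) ∧ ∀ j, M.alpha (u j) = 0 := by
  have hreach : ∀ d : Fin m → ZMod 2, ∃ t ∈ P, ∀ j, (M.lam t (u₀ j) : ZMod 2) = d j :=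
    fun d => ⟨∑ l, (d l).val • (bP l : X), sum_mem fun l _ => nsmul_mem (bP l).2 _,
      fun j => by simp [hlam₀]⟩
  choose ε hε using fun j => M.alpha_mem_range (u₀ j)
  -- Adding `torsionOf (t i)` to `u₀ i` shifts `q (u i) (u j)` by `D i j + D j i` and `α (u i)`
  -- by `∂ (D i i)`, so this upper-triangular `D` kills both.
  let D : Fin m → Fin m → ZMod 2 := fun i j =>
    if i < j then M.qf (u₀ i) (u₀ j) else if i = j then ε i else 0
  choose t htP htD using fun i => hreach (D i)
  refine ⟨fun i => u₀ i + M.torsionOf (t i),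
    fun j => add_mem (hu₀ j) (M.torsionOf_mem (hP (htP j))),
    fun i j => by simp [hlam₀, lam_torsionOf], fun i j => ?_, fun j => ?_⟩
  · simp only [map_add, AddMonoidHom.add_apply, qf_torsionOf, lam_torsionOf, Int.cast_zero,
      M.qf_symm (u₀ i) (M.torsionOf _), htD]
    rcases lt_trichotomy i j with h | rfl | h
    · simp [D, h, h.ne', h.not_gt, CharTwo.add_self_eq_zero]
    · simp [D, qf_self, CharTwo.add_self_eq_zero]
    · simp [D, h, h.ne', h.not_gt, M.qf_symm (u₀ j), CharTwo.add_self_eq_zero]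
  · rw [alpha_add_torsionOf, htD, ← hε, ← map_add]
    simp [D, CharTwo.add_self_eq_zero]

/-- Inverse of the coordinate isomorphism `eY` of the complementary Wall pairing. -/
def coords (Y' : AddSubgroup Y) {m : ℕ} (b : Fin m → X) (u : Fin m → Y) :
    Y' →+ (Fin m → ℤ) × (Fin m → ZMod 2) :=
  (AddMonoidHom.pi fun j => (M.lam (b j)).comp Y'.subtype).prod
    (AddMonoidHom.pi fun j => (M.qf.flip (u j)).comp Y'.subtype)

@[simp]
theorem coords_apply (Y' : AddSubgroup Y) {m : ℕ} (b : Fin m → X) (u : Fin m → Y) (y : Y') :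
    M.coords Y' b u y = (fun j => M.lam (b j) y, fun j => M.qf y (u j)) :=
  rfl

theorem eq_zero_of_coords_eq_zero (hY : W ⊔ lamPerpY M.lam V = ⊤) {P : AddSubgroup X}
    (hX : V ⊔ P = ⊤) {m : ℕ} (bP : Basis (Fin m) ℤ P) {u : Fin m → Y}
    (hu : ∀ j, u j ∈ lamPerpY M.lam V)
    (hlam : ∀ i j, M.lam (bP i) (u j) = if i = j then 1 else 0)
    {y : Y} (hy : y ∈ lamPerpY M.lam V ⊓ qPerp M.qf W) (hyP : ∀ j, M.lam (bP j) y = 0)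
    (hyu : ∀ j, M.qf y (u j) = 0) : y = 0 := by
  -- `y` is torsion, and `q y` vanishes on `W`, on the `u j` and on torsion elements; these
  -- span `Y = W + V^⊥`, as `t ∈ V^⊥` differs from `∑ λ(bP j, t) • u j` by a torsion element.
  have hdecomp := fun {t} (ht : t ∈ lamPerpY M.lam V) =>
    lam_sub_sum_eq_zero M.lam hX bP hu hlam ht
  have hlamy : ∀ x, M.lam x y = 0 := fun x => by simpa [hyP] using hdecomp hy.1 x
  obtain ⟨x₀, rfl⟩ := M.exists_torsionOf_eq hlamy
  refine M.eq_zero_of_lam_qf hlamy fun y' => ?_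
  obtain ⟨w, hw, t, ht, rfl⟩ := AddSubgroup.mem_sup.mp (hY ▸ AddSubgroup.mem_top y')
  rw [← sub_add_cancel t (∑ j, M.lam (bP j) t • u j), map_add, map_add, hy.2 w hw,
    qf_torsionOf, hdecomp ht]
  simp [hyu]

theorem coords_bijective (hY : W ⊔ lamPerpY M.lam V = ⊤) {P : AddSubgroup X}
    (hP : P ≤ lamPerpX M.lam W) (hX : V ⊔ P = ⊤) {m : ℕ} (bP : Basis (Fin m) ℤ P)
    {u : Fin m → Y} (hu : ∀ j, u j ∈ lamPerpY M.lam V ⊓ qPerp M.qf W)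
    (hlam : ∀ i j, M.lam (bP i) (u j) = if i = j then 1 else 0)
    (huu : ∀ i j, M.qf (u i) (u j) = 0) :
    Function.Bijective
      (M.coords (lamPerpY M.lam V ⊓ qPerp M.qf W) (fun j => (bP j : X)) u) := by
  refine ⟨(injective_iff_map_eq_zero _).mpr fun y hy => ?_, fun ⟨c, d⟩ => ?_⟩
  · exact Subtype.ext (M.eq_zero_of_coords_eq_zero hY hX bP (fun j => (hu j).1) hlam y.2
      (congrFun (congrArg Prod.fst hy)) (congrFun (congrArg Prod.snd hy)))
  · refine ⟨⟨∑ j, c j • u j + ∑ j, (d j).val • M.torsionOf (bP j),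
      add_mem (sum_mem fun j _ => zsmul_mem (hu j) _)
        (sum_mem fun j _ => nsmul_mem (M.torsionOf_mem (hP (bP j).2)) _)⟩, ?_⟩
    ext j <;> simp [hlam, lam_torsionOf, huu, qf_torsionOf]

theorem exists_restriction_of_coords_bijective {X' : AddSubgroup X} {Y' : AddSubgroup Y} {m : ℕ}
    (b : Basis (Fin m) ℤ X') (u z : Fin m → Y')
    (hbij : Function.Bijective (M.coords Y' (fun j => (b j : X)) (fun j => (u j : Y))))
    (hlu : ∀ i j, M.lam (b i) (u j) = if i = j then 1 else 0)
    (hlz : ∀ i j, M.lam (b i) (z j) = 0)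
    (hzu : ∀ i j, M.qf (z i) (u j) = if i = j then 1 else 0)
    (huu : ∀ i j, M.qf (u i) (u j) = 0) (hzz : ∀ i j, M.qf (z i) (z j) = 0)
    (hau : ∀ j, M.alpha (u j) = 0) (haz : ∀ j, M.alpha (z j) = 0) :
    ∃ W' : WallPairing m X' Y' A, W'.bd = M.bd ∧
      (∀ (a : X') (b : Y'), W'.lam a b = M.lam a b) ∧
      (∀ b b' : Y', W'.qf b b' = M.qf b b') ∧ ∀ b : Y', W'.alpha b = M.alpha b := by
  let e := (AddEquiv.ofBijective _ hbij).symm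
  have heu : ∀ j, e (Pi.single j 1, 0) = u j := fun j =>
    (AddEquiv.symm_apply_eq _).mpr <|
      Prod.ext (funext fun i => by simp [hlu, Pi.single_apply, eq_comm])
        (funext fun i => by simp [huu])
  have hez : ∀ j, e (0, Pi.single j 1) = z j := fun j =>
    (AddEquiv.symm_apply_eq _).mpr <|
      Prod.ext (funext fun i => by simp [hlz])
        (funext fun i => by simp [hzu, Pi.single_apply, eq_comm])
  exact ⟨{
    lam := (M.lam.comp X'.subtype).compl₂ Y'.subtype
    qf := (M.qf.comp Y'.subtype).compl₂ Y'.subtype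
    qf_symm := fun a b => M.qf_symm a b
    bd := M.bd
    alpha := fun y => M.alpha y
    alpha_add := fun a b => M.alpha_add a b
    bX := b
    eY := e
    lam_xy := by simp [heu, hlu]
    lam_xz := by simp [hez, hlz]
    q_yz := by simp [heu, hez, M.qf_symm (u _), hzu, eq_comm]
    q_yy := by simp [heu, huu]
    q_zz := by simp [hez, hzz]
    alpha_y := by simp [heu, hau]
    alpha_z := by simp [hez, haz] }, rfl, fun _ _ => rfl, fun _ _ => rfl, fun _ => rfl⟩

end Complement

end WallPairing

theorem wallPairing_complement_general {g : ℕ} {X Y A : Type} [AddCommGroup X] [AddCommGroup Y]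
    [AddCommGroup A] (W : WallPairing g X Y A) (k : ℕ)
    (V : AddSubgroup X) (Wsub : AddSubgroup Y)
    (hVfree : Nonempty (Module.Basis (Fin k) ℤ V))
    (hWfree : Nonempty (Module.Basis (Fin k) ℤ Wsub))
    (hperf₁ : Function.Bijective fun v : V => (W.lam (v : X)).comp Wsub.subtype)
    (hperf₂ : Function.Bijective fun w : Wsub => (W.lam.flip (w : Y)).comp V.subtype) :
    ∃ W' : WallPairing (g - k) (lamPerpX W.lam Wsub)
        (↥((lamPerpY W.lam V) ⊓ (qPerp W.qf Wsub))) A,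
      W'.bd = W.bd ∧
      (∀ (a : lamPerpX W.lam Wsub) (b : ↥((lamPerpY W.lam V) ⊓ (qPerp W.qf Wsub))),
        W'.lam a b = W.lam (a : X) (b : Y)) ∧
      (∀ b b' : ↥((lamPerpY W.lam V) ⊓ (qPerp W.qf Wsub)),
        W'.qf b b' = W.qf (b : Y) (b' : Y)) ∧
      (∀ b : ↥((lamPerpY W.lam V) ⊓ (qPerp W.qf Wsub)), W'.alpha b = W.alpha (b : Y)) := by
  obtain ⟨bV⟩ := hVfree
  obtain ⟨bW⟩ := hWfree
  have := Module.Free.of_basis bW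
  have hX := isCompl_lamPerpX W.lam V Wsub hperf₁
  have hY := isCompl_lamPerpY W.lam V Wsub hperf₂
  obtain ⟨bP⟩ := nonempty_basis_of_isCompl hX W.bX bV
  obtain ⟨u₀, hu₀, hlam₀⟩ := W.exists_lam_dual hperf₁.2 hX bP
  obtain ⟨u, hu, hlu, huu, hau⟩ := W.exists_isotropic_dual le_rfl bP hu₀ hlam₀
  exact W.exists_restriction_of_coords_bijective bP (fun j => ⟨u j, hu j⟩)
    (fun j => ⟨W.torsionOf (bP j), W.torsionOf_mem (bP j).2⟩)
    (W.coords_bijective hY.sup_eq_top le_rfl hX.sup_eq_top bP hu hlu huu) hlu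
    (fun _ _ => W.lam_torsionOf _ _) (fun _ _ => by simp [WallPairing.qf_torsionOf, hlu]) huu
    (fun _ _ => by simp [WallPairing.qf_torsionOf, WallPairing.lam_torsionOf]) hau
    (fun _ => W.alpha_torsionOf _)

/-- If `V ⊆ X` and `W ⊆ Y` are free rank-`k` direct summands (`k > 0`) such
that the restriction of `λ` to `V × W` is a perfect pairing, then `(W^⊥, V^⊥ ∩ Ŵ)` with the
restrictions of `λ`, `q`, `α` (and the same `∂`) is a Wall pairing of rank `g - k`. -/
theorem wallPairing_complement {g : ℕ} {X Y A : Type} [AddCommGroup X] [AddCommGroup Y]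
    [AddCommGroup A] (W : WallPairing g X Y A) (k : ℕ) (hk : 0 < k)
    (V : AddSubgroup X) (Wsub : AddSubgroup Y)
    (hVfree : Nonempty (Module.Basis (Fin k) ℤ V)) (hVsum : ∃ C : AddSubgroup X, IsCompl V C)
    (hWfree : Nonempty (Module.Basis (Fin k) ℤ Wsub)) (hWsum : ∃ C : AddSubgroup Y, IsCompl Wsub C)
    (hperf₁ : Function.Bijective fun v : V => (W.lam (v : X)).comp Wsub.subtype)
    (hperf₂ : Function.Bijective fun w : Wsub => (W.lam.flip (w : Y)).comp V.subtype) :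
    ∃ W' : WallPairing (g - k) (lamPerpX W.lam Wsub)
        (↥((lamPerpY W.lam V) ⊓ (qPerp W.qf Wsub))) A,
      W'.bd = W.bd ∧
      (∀ (a : lamPerpX W.lam Wsub) (b : ↥((lamPerpY W.lam V) ⊓ (qPerp W.qf Wsub))),
        W'.lam a b = W.lam (a : X) (b : Y)) ∧
      (∀ b b' : ↥((lamPerpY W.lam V) ⊓ (qPerp W.qf Wsub)),
        W'.qf b b' = W.qf (b : Y) (b' : Y)) ∧
      (∀ b : ↥((lamPerpY W.lam V) ⊓ (qPerp W.qf Wsub)), W'.alpha b = W.alpha (b : Y)) :=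
  wallPairing_complement_general W k V Wsub hVfree hWfree hperf₁ hperf₂
end

section
/- Let (X, Y, λ, q, α) be a Wall pairing of rank g with associated homomorphism ρ : X → Torsion(Y), and let (v_1,w_1),…,(v_i,w_i) ∈ X×Y satisfy λ(v_l, w_m) = δ_{lm}, q(w_l, w_m) = 0, and α(w_l) = 0 for all l, m. Set V = span(v_1,…,v_i) and W = span(w_1,…,w_i). Then Y decomposes as an internal direct sum Y = (V^⊥ ∩ Ŵ) ⊕ W ⊕ ρ(V), where V^⊥ = {y ∈ Y : λ(v,y)=0 for all v ∈ V} and Ŵ = {y ∈ Y : q(y,w)=0 for all w ∈ W}. -/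
/-! The pairs `(v_l, w_l)` are biorthogonal for `λ`, so `y ↦ ∑ λ(v_l, y) w_l` projects `Y` onto
`W` with kernel `V^⊥`, and `ρ(V) ⊆ V^⊥` because `λ` kills torsion. Inside `V^⊥`, subtracting
`ρ(∑ c_l v_l)` with `c_l ≡ q(y, w_l) mod 2` lands in `Ŵ`, since `q(ρ x, w_l) ≡ λ(x, w_l)`.
For uniqueness, an element `ρ x ∈ ρ(V)` lying in `Ŵ` has all `λ(x, w_l)` even, hence
`q(ρ x, ·) = 0`, and `q` is nondegenerate on the torsion of `Y`. -/

open AddSubgroup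

theorem AddSubgroup.existsUnique_add_add_of_independent {G : Type*} [AddCommGroup G]
    (P Q R : AddSubgroup G) (hspan : ∀ y, ∃ p ∈ P, ∃ q ∈ Q, ∃ r ∈ R, y = p + q + r)
    (hindep : ∀ p ∈ P, ∀ q ∈ Q, ∀ r ∈ R, p + q + r = 0 → p = 0 ∧ q = 0 ∧ r = 0) (y : G) :
    ∃! t : P × Q × R, y = t.1 + t.2.1 + t.2.2 := by
  obtain ⟨p, hp, q, hq, r, hr, rfl⟩ := hspan y
  refine ⟨(⟨p, hp⟩, ⟨q, hq⟩, ⟨r, hr⟩), rfl, ?_⟩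
  rintro ⟨⟨p', hp'⟩, ⟨q', hq'⟩, ⟨r', hr'⟩⟩ h
  obtain ⟨h₁, h₂, h₃⟩ := hindep (p' - p) (sub_mem hp' hp) (q' - q) (sub_mem hq' hq) (r' - r)
    (sub_mem hr' hr) (by simp only at h; linear_combination (norm := abel) -h)
  simp_all only [sub_eq_zero]

section Perp

variable {X Y : Type} [AddCommGroup X] [AddCommGroup Y]

theorem mem_lamPerpY_closure_iff {lam : X →+ Y →+ ℤ} {S : Set X} {y : Y} :
    y ∈ lamPerpY lam (closure S) ↔ ∀ x ∈ S, lam x y = 0 :=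
  ⟨fun h x hx => h x (subset_closure hx), fun h _ hx =>
    (closure_le (lam.flip y).ker).2 h hx⟩

theorem mem_qPerp_closure_iff {q : Y →+ Y →+ ZMod 2} {S : Set Y} {y : Y} :
    y ∈ qPerp q (closure S) ↔ ∀ w ∈ S, q y w = 0 :=
  ⟨fun h w hw => h w (subset_closure hw), fun h _ hw =>
    (closure_le (q y).ker).2 h hw⟩

theorem AddMonoidHom.eq_zero_of_mem_torsion {G : Type*} [AddCommGroup G] (f : G →+ ℤ) {t : G}
    (ht : t ∈ AddCommGroup.torsion G) : f t = 0 :=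
  (f.isOfFinAddOrder ht).eq_zero'

end Perp

section Biorthogonal

variable {X Y : Type} [AddCommGroup X] [AddCommGroup Y] {lam : X →+ Y →+ ℤ}
  {ι : Type*} [Fintype ι] [DecidableEq ι] {v : ι → X} {w : ι → Y}

theorem lam_sum_zsmul_left (hlam : ∀ l m, lam (v l) (w m) = if l = m then 1 else 0)
    (c : ι → ℤ) (m : ι) : lam (∑ l, c l • v l) (w m) = c m := by
  simp [hlam]

theorem lam_sum_zsmul_right (hlam : ∀ l m, lam (v l) (w m) = if l = m then 1 else 0)
    (c : ι → ℤ) (l : ι) : lam (v l) (∑ m, c m • w m) = c l := by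
  simp [hlam]

theorem eq_sum_lam_zsmul_of_mem_closure_range_left
    (hlam : ∀ l m, lam (v l) (w m) = if l = m then 1 else 0) {x : X}
    (hx : x ∈ closure (Set.range v)) : x = ∑ l, lam x (w l) • v l := by
  obtain ⟨c, rfl⟩ := AddSubgroup.exists_of_mem_closure_range v x hx
  simp only [lam_sum_zsmul_left hlam]

theorem eq_sum_lam_zsmul_of_mem_closure_range_right
    (hlam : ∀ l m, lam (v l) (w m) = if l = m then 1 else 0) {y : Y}
    (hy : y ∈ closure (Set.range w)) : y = ∑ l, lam (v l) y • w l := by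
  obtain ⟨c, rfl⟩ := AddSubgroup.exists_of_mem_closure_range w y hy
  simp only [lam_sum_zsmul_right hlam]

end Biorthogonal

namespace WallPairing

variable {g : ℕ} {X Y A : Type} [AddCommGroup X] [AddCommGroup Y] [AddCommGroup A]
  (W : WallPairing g X Y A)

theorem symm_eY_fst_eq_zero_of_mem_torsion {t : Y} (ht : t ∈ AddCommGroup.torsion Y) :
    (W.eY.symm t).1 = 0 :=
  (((AddMonoidHom.fst _ _).comp W.eY.symm.toAddMonoidHom).isOfFinAddOrder ht).eq_zero'

theorem qf_eY_inl_eY_inr (j : Fin g) (c : Fin g → ZMod 2) :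
    W.qf (W.eY (Pi.single j 1, 0)) (W.eY (0, c)) = c j := by
  suffices (W.qf (W.eY (Pi.single j 1, 0))).comp (W.eY.toAddMonoidHom.comp (.inr _ _)) =
      Pi.evalAddMonoidHom (fun _ => ZMod 2) j from DFunLike.congr_fun this c
  refine AddMonoidHom.functions_ext _ _ _ fun k x => ?_
  obtain rfl | rfl : x = 0 ∨ x = 1 := by revert x; decide
  · simp [Prod.mk_zero_zero]
  · simp [W.q_yz, Pi.single_apply]

theorem eq_zero_of_mem_torsion_of_qf_eq_zero {t : Y} (ht : t ∈ AddCommGroup.torsion Y)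
    (h : ∀ z, W.qf t z = 0) : t = 0 := by
  have ht' : t = W.eY (0, (W.eY.symm t).2) := by
    rw [← W.symm_eY_fst_eq_zero_of_mem_torsion ht, Prod.mk.eta, AddEquiv.apply_symm_apply]
  suffices (W.eY.symm t).2 = 0 by rw [ht', this, Prod.mk_zero_zero, map_zero]
  funext j
  rw [Pi.zero_apply, ← W.qf_eY_inl_eY_inr j (W.eY.symm t).2, ← ht', W.qf_symm, h]

variable (ρ : X →+ AddCommGroup.torsion Y) {ι : Type*} [Fintype ι] [DecidableEq ι]
  {v : ι → X} {w : ι → Y}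

theorem exists_decomposition
    (hρ : ∀ (x : X) (y : Y), W.qf (ρ x : Y) y = ((W.lam x y : ℤ) : ZMod 2))
    (hlam : ∀ l m, W.lam (v l) (w m) = if l = m then 1 else 0) (y : Y) :
    ∃ p ∈ lamPerpY W.lam (closure (Set.range v)) ⊓ qPerp W.qf (closure (Set.range w)),
    ∃ q ∈ closure (Set.range w),
    ∃ r ∈ (closure (Set.range v)).map ((AddCommGroup.torsion Y).subtype.comp ρ),
      y = p + q + r := by
  set q := ∑ l, W.lam (v l) y • w l
  set x := ∑ l, ((W.qf (y - q) (w l)).val : ℤ) • v l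
  refine ⟨y - q - ρ x, mem_inf.2 ⟨?_, ?_⟩, q, mem_closure_range_iff_of_fintype.2 ⟨_, rfl⟩,
    ρ x, ⟨x, mem_closure_range_iff_of_fintype.2 ⟨_, rfl⟩, rfl⟩, by abel⟩
  · rw [mem_lamPerpY_closure_iff]
    rintro _ ⟨l, rfl⟩
    rw [map_sub, map_sub, lam_sum_zsmul_right hlam, (W.lam (v l)).eq_zero_of_mem_torsion (ρ x).2]
    simp
  · rw [mem_qPerp_closure_iff]
    rintro _ ⟨m, rfl⟩
    rw [map_sub, AddMonoidHom.sub_apply, hρ, lam_sum_zsmul_left hlam]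
    simp

theorem decomposition_independent
    (hρ : ∀ (x : X) (y : Y), W.qf (ρ x : Y) y = ((W.lam x y : ℤ) : ZMod 2))
    (hlam : ∀ l m, W.lam (v l) (w m) = if l = m then 1 else 0) {p q r : Y}
    (hp : p ∈ lamPerpY W.lam (closure (Set.range v)) ⊓ qPerp W.qf (closure (Set.range w)))
    (hq : q ∈ closure (Set.range w))
    (hr : r ∈ (closure (Set.range v)).map ((AddCommGroup.torsion Y).subtype.comp ρ))
    (h : p + q + r = 0) : p = 0 ∧ q = 0 ∧ r = 0 := by
  obtain ⟨hpv, hpw⟩ := mem_inf.1 hp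
  obtain ⟨x, hx, rfl⟩ := hr
  change p + q + (ρ x : Y) = 0 at h
  change p = 0 ∧ q = 0 ∧ (ρ x : Y) = 0
  have hq0 : q = 0 := by
    rw [eq_sum_lam_zsmul_of_mem_closure_range_right hlam hq]
    refine Finset.sum_eq_zero fun l _ => ?_
    have hl := congrArg (W.lam (v l)) h
    rw [map_add, map_add, mem_lamPerpY_closure_iff.1 hpv _ ⟨l, rfl⟩,
      (W.lam (v l)).eq_zero_of_mem_torsion (ρ x).2, map_zero, zero_add, add_zero] at hl
    rw [hl, zero_smul]
  subst hq0
  rw [add_zero] at h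
  have hx_even : ∀ l, ((W.lam x (w l) : ℤ) : ZMod 2) = 0 := fun l => by
    have hl : W.qf (p + ρ x) (w l) = 0 := by rw [h, map_zero, AddMonoidHom.zero_apply]
    rwa [map_add, AddMonoidHom.add_apply, mem_qPerp_closure_iff.1 hpw _ ⟨l, rfl⟩, zero_add,
      hρ] at hl
  have hr0 : (ρ x : Y) = 0 := W.eq_zero_of_mem_torsion_of_qf_eq_zero (ρ x).2 fun z => by
    rw [hρ, eq_sum_lam_zsmul_of_mem_closure_range_left hlam hx]
    simp [hx_even]
  exact ⟨by rwa [hr0, add_zero] at h, rfl, hr0⟩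

end WallPairing

theorem wallPairing_internal_direct_sum_general {g : ℕ} {X Y A : Type} [AddCommGroup X]
    [AddCommGroup Y] [AddCommGroup A] (W : WallPairing g X Y A)
    (ρ : X →+ AddCommGroup.torsion Y)
    (hρ : ∀ (x : X) (y : Y), W.qf (ρ x : Y) y = ((W.lam x y : ℤ) : ZMod 2))
    (i : ℕ) (v : Fin i → X) (w : Fin i → Y)
    (hlam : ∀ l m, W.lam (v l) (w m) = if l = m then 1 else 0) :
    ∀ y : Y, ∃! t :
        (↥(lamPerpY W.lam (AddSubgroup.closure (Set.range v)) ⊓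
            qPerp W.qf (AddSubgroup.closure (Set.range w))) ×
          (AddSubgroup.closure (Set.range w)) ×
          ((AddSubgroup.closure (Set.range v)).map
            ((AddCommGroup.torsion Y).subtype.comp ρ))),
      y = (t.1 : Y) + (t.2.1 : Y) + (t.2.2 : Y) :=
  existsUnique_add_add_of_independent _ _ _ (W.exists_decomposition ρ hρ hlam)
    fun _ hp _ hq _ hr h => W.decomposition_independent ρ hρ hlam hp hq hr h

/-- Given a configuration `(v_1,w_1),…,(v_i,w_i)` with `λ(v_l,w_m) = δ_{lm}`,
`q(w_l,w_m) = 0`, `α(w_l) = 0`, and `V = span(v)`, `W = span(w)`, the module `Y` is the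
internal direct sum `(V^⊥ ∩ Ŵ) ⊕ W ⊕ ρ(V)`: every `y ∈ Y` has a unique expression as a sum
of elements of the three subgroups. -/
theorem wallPairing_internal_direct_sum {g : ℕ} {X Y A : Type} [AddCommGroup X]
    [AddCommGroup Y] [AddCommGroup A] (W : WallPairing g X Y A)
    (ρ : X →+ AddCommGroup.torsion Y)
    (hρ : ∀ (x : X) (y : Y), W.qf (ρ x : Y) y = ((W.lam x y : ℤ) : ZMod 2))
    (i : ℕ) (v : Fin i → X) (w : Fin i → Y)
    (hlam : ∀ l m, W.lam (v l) (w m) = if l = m then 1 else 0)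
    (hq : ∀ l m, W.qf (w l) (w m) = 0) (halpha : ∀ l, W.alpha (w l) = 0) :
    ∀ y : Y, ∃! t :
        (↥(lamPerpY W.lam (AddSubgroup.closure (Set.range v)) ⊓
            qPerp W.qf (AddSubgroup.closure (Set.range w))) ×
          (AddSubgroup.closure (Set.range w)) ×
          ((AddSubgroup.closure (Set.range v)).map
            ((AddCommGroup.torsion Y).subtype.comp ρ))),
      y = (t.1 : Y) + (t.2.1 : Y) + (t.2.2 : Y) :=
  wallPairing_internal_direct_sum_general W ρ hρ i v w hlam
end
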